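/- Let μ be a probability measure on a finite set Ω and let f : Ω → ℝ≥0 be a density with respect to μ (i.e., Σ_η f(η) μ(η) = 1). Then for any subset A ⊆ Ω with μ(A) > 0, ∫_A f dμ ≤ (H(f;μ) + log 2) / log(1 + μ(A)^{-1}), where H(f;μ) = Σ_η f(η) log f(η) μ(η) is the relative entropy. -/
import Mathlib

lemma young_entropy (a b : ℝ) (ha : 0 ≤ a) :
    a * b ≤ a * Real.log a - a + Real.exp b := by
  rcases eq_or_lt_of_le ha with h | h
  · simp [← h]
    positivity
  · have h1 : b - Real.log a + 1 ≤ Real.exp (b - Real.log a) := Real.add_one_le_exp _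
    have h2 : Real.exp (b - Real.log a) = Real.exp b / a := by
      rw [Real.exp_sub, Real.exp_log h]
    have h3 := mul_le_mul_of_nonneg_left h1 ha
    rw [h2] at h3
    have h4 : a * (Real.exp b / a) = Real.exp b := by field_simp
    nlinarith

/-- Entropy bound for the integral of a density over a set (Prop. 8.2, App. 1 of Kipnis–Landim):
`∫_A f dμ ≤ (H(f;μ) + log 2) / log(1 + μ(A)⁻¹)`. -/
theorem stmt_2 (Ω : Type) [Fintype Ω] (μ : Ω → ℝ) (hμ : ∀ η, 0 ≤ μ η)
    (hμ1 : ∑ η, μ η = 1) (f : Ω → ℝ) (hf : ∀ η, 0 ≤ f η)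
    (hf1 : ∑ η, f η * μ η = 1) (A : Finset Ω) (hA : 0 < ∑ η ∈ A, μ η) :
    ∑ η ∈ A, f η * μ η ≤
      ((∑ η, f η * Real.log (f η) * μ η) + Real.log 2) /
        Real.log (1 + (∑ η ∈ A, μ η)⁻¹) := by
  classical
  set m : ℝ := ∑ η ∈ A, μ η with hm
  set t : ℝ := Real.log (1 + m⁻¹) with htdef
  have hminv : 0 < m⁻¹ := inv_pos.mpr hA
  have ht : 0 < t := Real.log_pos (by linarith)
  set g : Ω → ℝ := fun η => if η ∈ A then t else 0 with hg
  -- pointwise Young with shift by log 2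
  have key : ∀ η, (f η * (g η - Real.log 2)) * μ η ≤
      (f η * Real.log (f η) - f η + Real.exp (g η) / 2) * μ η := by
    intro η
    apply mul_le_mul_of_nonneg_right _ (hμ η)
    have := young_entropy (f η) (g η - Real.log 2) (hf η)
    have h2 : Real.exp (g η - Real.log 2) = Real.exp (g η) / 2 := by
      rw [Real.exp_sub, Real.exp_log (by norm_num)]
    linarith [this, h2.le, h2.ge]
  have hsum : ∑ η, (f η * (g η - Real.log 2)) * μ η ≤
      ∑ η, (f η * Real.log (f η) - f η + Real.exp (g η) / 2) * μ η :=
    Finset.sum_le_sum (fun η _ => key η)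
  -- compute LHS sum
  have hL : ∑ η, (f η * (g η - Real.log 2)) * μ η
      = t * (∑ η ∈ A, f η * μ η) - Real.log 2 := by
    have : ∀ η, (f η * (g η - Real.log 2)) * μ η
        = (if η ∈ A then t * (f η * μ η) else 0) - Real.log 2 * (f η * μ η) := by
      intro η
      simp only [hg]
      split <;> ring
    rw [Finset.sum_congr rfl (fun η _ => this η), Finset.sum_sub_distrib,
      ← Finset.mul_sum, hf1, Finset.sum_ite_mem, Finset.univ_inter, Finset.mul_sum]
    ring
  -- compute exp sum
  have hE : ∑ η, Real.exp (g η) * μ η = 2 := by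
    have : ∀ η, Real.exp (g η) * μ η
        = μ η + (if η ∈ A then m⁻¹ * μ η else 0) := by
      intro η
      simp only [hg]
      split
      · rw [Real.exp_log (by linarith)]; ring
      · simp
    rw [Finset.sum_congr rfl (fun η _ => this η), Finset.sum_add_distrib, hμ1,
      Finset.sum_ite_mem, Finset.univ_inter, ← Finset.mul_sum, ← hm,
      inv_mul_cancel₀ (ne_of_gt hA)]
    norm_num
  -- compute RHS sum
  have hR : ∑ η, (f η * Real.log (f η) - f η + Real.exp (g η) / 2) * μ η
      = (∑ η, f η * Real.log (f η) * μ η) - 1 + 1 := by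
    have : ∀ η, (f η * Real.log (f η) - f η + Real.exp (g η) / 2) * μ η
        = f η * Real.log (f η) * μ η - f η * μ η + (Real.exp (g η) * μ η) / 2 := by
      intro η; ring
    rw [Finset.sum_congr rfl (fun η _ => this η), Finset.sum_add_distrib,
      Finset.sum_sub_distrib, hf1, ← Finset.sum_div, hE]
    norm_num
  rw [hL, hR] at hsum
  rw [le_div_iff₀ ht]
  nlinarith
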